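/- Special case of the main theorem for entropy: Let (X,d,T) be a compact dynamical system with the specification property and z₀ a non-transitive point. Then either E(z₀) = ∅ or the Bowen topological entropy of E(z₀) equals the topological entropy of T: h^B(T, E(z₀)) = h_top(T). -/

import Mathlib

open Filter Set Metric Topology MeasureTheory
open scoped ENNReal NNReal

noncomputable section

/-- Birkhoff sum `S_n φ(x)`. -/
def birkhoff {X : Type*} (T : X → X) (φ : X → ℝ) (n : ℕ) (x : X) : ℝ :=
  ∑ i ∈ Finset.range n, φ (T^[i] x)

/-- Bowen ball `B_n(x, ε)`. -/
def bowenBall {X : Type*} [PseudoMetricSpace X] (T : X → X) (n : ℕ) (x : X) (ε : ℝ) : Set X :=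
  {y | ∀ i < n, dist (T^[i] x) (T^[i] y) < ε}

/-- The quantity `M(Z, t, φ, n, ε)` of Pesin–Pitskel: infimum over countable covers of `Z`
by Bowen balls `B_m(x,ε)` with `m ≥ n` of `Σ exp(-t m + sup_{B_m(x,ε)} S_m φ)`. -/
def ppM {X : Type*} [PseudoMetricSpace X] (T : X → X) (φ : X → ℝ) (Z : Set X)
    (t : ℝ) (n : ℕ) (ε : ℝ) : ℝ≥0∞ :=
  ⨅ (c : ℕ → ℕ × X) (_ : ∀ i, n ≤ (c i).1)
    (_ : Z ⊆ ⋃ i, bowenBall T (c i).1 (c i).2 ε),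
    ∑' i, ENNReal.ofReal (Real.exp (-t * (c i).1 +
      sSup ((birkhoff T φ (c i).1) '' bowenBall T (c i).1 (c i).2 ε)))

/-- `M(Z,t,φ,ε) = lim_{n→∞} M(Z,t,φ,n,ε)` (a monotone limit, hence a supremum). -/
def ppMlim {X : Type*} [PseudoMetricSpace X] (T : X → X) (φ : X → ℝ) (Z : Set X)
    (t : ℝ) (ε : ℝ) : ℝ≥0∞ :=
  ⨆ n : ℕ, ppM T φ Z t n ε

/-- Pesin–Pitskel pressure at scale `ε`: `P(Z,φ,ε) = inf {t : M(Z,t,φ,ε) = 0}`. -/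
def ppPressureAt {X : Type*} [PseudoMetricSpace X] (T : X → X) (φ : X → ℝ) (Z : Set X)
    (ε : ℝ) : ℝ :=
  sInf {t : ℝ | ppMlim T φ Z t ε = 0}

/-- Pesin–Pitskel topological pressure `P(Z,φ) = lim_{ε→0} P(Z,φ,ε)`. -/
def ppPressure {X : Type*} [PseudoMetricSpace X] (T : X → X) (φ : X → ℝ) (Z : Set X) : ℝ :=
  limsup (fun ε => ppPressureAt T φ Z ε) (𝓝[>] (0 : ℝ))

/-- `E` is an `(n,ε)`-separated set for `T`. -/
def IsSep {X : Type*} [PseudoMetricSpace X] (T : X → X) (n : ℕ) (ε : ℝ) (E : Set X) : Prop :=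
  ∀ x ∈ E, ∀ y ∈ E, x ≠ y → ∃ i < n, ε < dist (T^[i] x) (T^[i] y)

/-- `P(φ, n, ε)`: supremum of `Σ_{x∈E} e^{S_n φ(x)}` over `(n,ε)`-separated sets `E`. -/
def sepSum {X : Type*} [PseudoMetricSpace X] (T : X → X) (φ : X → ℝ) (n : ℕ) (ε : ℝ) : ℝ :=
  sSup {r : ℝ | ∃ E : Finset X, IsSep T n ε ↑E ∧ r = ∑ x ∈ E, Real.exp (birkhoff T φ n x)}

/-- Classical topological pressure via separated sets. -/
def Ptop {X : Type*} [PseudoMetricSpace X] (T : X → X) (φ : X → ℝ) : ℝ :=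
  limsup (fun ε => limsup (fun n : ℕ => Real.log (sepSum T φ n ε) / n) atTop) (𝓝[>] (0 : ℝ))

/-- The specification property. -/
def Specification {X : Type*} [PseudoMetricSpace X] (T : X → X) : Prop :=
  ∀ ε : ℝ, 0 < ε → ∃ m : ℕ, ∀ (k : ℕ) (a b : Fin k → ℕ) (xs : Fin k → X),
    (∀ j, a j ≤ b j) →
    (∀ (j : ℕ) (h : j + 1 < k), b ⟨j, Nat.lt_of_succ_lt h⟩ + m ≤ a ⟨j + 1, h⟩) →
    ∃ x : X, ∀ j : Fin k, ∀ p ≤ b j - a j, dist (T^[p + a j] x) (T^[p] (xs j)) < ε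

/-- The non-dense orbit set `E(z₀)`. -/
def Eset {X : Type*} [TopologicalSpace X] (T : X → X) (z₀ : X) : Set X :=
  {x | z₀ ∉ closure (Set.range fun n : ℕ => T^[n] x)}

end

/-!
Upper bound: the Bowen balls of a maximal `(N, ε/2)`-separated set cover `X`, so for every `Z`
the Pesin–Pitskel pressure of `φ = 0` at scale `ε` is at most `h(ε/2)`, where
`h(δ) = limsup_N log s(N, δ) / N` and `s(N, δ)` is the largest size of an `(N, δ)`-separated set.

Lower bound: pick `w` off the orbit closure of `z₀`. By specification, every word over a maximal
`(n + 1, 4ε)`-separated set `Γ` is `ε`-shadowed, one block of length `L = n + 1 + 2m` per letter,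
by a point that comes back to the `ε`-ball around `w` in every block; such points form a compact
subset of `E(z₀)`. A Bowen ball of length `M` meeting two such points forces their words to agree
on the first `⌊M / L⌋` letters, so counting words shows that every cover of `E(z₀)` has mass at
least `1` at exponents `t < log |Γ| / L`. Hence `h(4ε) ≤ P(E(z₀), 0, ε)`, and the two bounds
squeeze the limits as `ε → 0`.
-/

section

variable {X : Type*} [PseudoMetricSpace X] {T : X → X}

def sepCards (T : X → X) (n : ℕ) (ε : ℝ) : Set ℕ :=
  {c | ∃ E : Finset X, IsSep T n ε ↑E ∧ E.card = c}

noncomputable def maxSepCard (T : X → X) (n : ℕ) (ε : ℝ) : ℕ :=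
  sSup (sepCards T n ε)

lemma exists_card_le_pow_of_isSep [CompactSpace X] {ε : ℝ} (hε : 0 < ε) :
    ∃ K : ℕ, 1 ≤ K ∧ ∀ (n : ℕ) (E : Finset X), IsSep T n ε ↑E → E.card ≤ K ^ n := by
  classical
  obtain ⟨s, -, hs_fin, hs⟩ := finite_cover_balls_of_compact (isCompact_univ (X := X)) (half_pos hε)
  have : Fintype s := hs_fin.fintype
  choose center hcenter_mem hcenter using fun x : X => mem_iUnion₂.1 (hs (mem_univ x))
  refine ⟨Fintype.card s + 1, by omega, fun n E hE => ?_⟩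
  -- a separated set injects into the itineraries through the cover
  have hinj : InjOn (fun x (i : Fin n) => (⟨center (T^[i] x), hcenter_mem _⟩ : s)) E := by
    intro x hx y hy hxy
    by_contra hne
    obtain ⟨i, hi, hsep⟩ := hE x hx y hy hne
    have hc : center (T^[i] x) = center (T^[i] y) := congrArg Subtype.val (congrFun hxy ⟨i, hi⟩)
    have h₁ := hcenter (T^[i] x)
    have h₂ := hcenter (T^[i] y)
    rw [hc, mem_ball] at h₁
    rw [mem_ball'] at h₂
    linarith [dist_triangle (T^[i] x) (center (T^[i] y)) (T^[i] y)]
  calc E.card ≤ Fintype.card (Fin n → s) :=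
        Finset.card_le_card_of_injOn _ (fun _ _ => Finset.mem_univ _) hinj
    _ ≤ (Fintype.card s + 1) ^ n := by
        rw [Fintype.card_fun, Fintype.card_fin]; exact Nat.pow_le_pow_left (by omega) n

lemma nonempty_sepCards {n : ℕ} {ε : ℝ} : (sepCards T n ε).Nonempty :=
  ⟨0, ∅, by simp [IsSep], rfl⟩

section maxSepCard

variable [CompactSpace X] {n : ℕ} {ε : ℝ}

lemma bddAbove_sepCards (hε : 0 < ε) : BddAbove (sepCards T n ε) := by
  obtain ⟨K, -, hK⟩ := exists_card_le_pow_of_isSep (T := T) hε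
  exact ⟨K ^ n, fun _ ⟨E, hE, hc⟩ => hc ▸ hK n E hE⟩

lemma exists_isSep_card_eq_maxSepCard (hε : 0 < ε) :
    ∃ E : Finset X, IsSep T n ε ↑E ∧ E.card = maxSepCard T n ε :=
  Nat.sSup_mem nonempty_sepCards (bddAbove_sepCards hε)

lemma IsSep.card_le_maxSepCard (hε : 0 < ε) {E : Finset X} (hE : IsSep T n ε ↑E) :
    E.card ≤ maxSepCard T n ε :=
  le_csSup (bddAbove_sepCards hε) ⟨E, hE, rfl⟩

lemma one_le_maxSepCard [Nonempty X] (hε : 0 < ε) : 1 ≤ maxSepCard T n ε := by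
  inhabit X
  have : IsSep T n ε ↑({default} : Finset X) := by simp [IsSep]
  simpa using this.card_le_maxSepCard hε

/-- A maximal `(N, δ)`-separated set is `(N, ε)`-spanning for every `ε > δ`. -/
lemma exists_cover_bowenBall_maxSepCard {δ : ℝ} (hδ : 0 < δ) (hδε : δ < ε) (N : ℕ) :
    ∃ s : Fin (maxSepCard T N δ) → X, univ ⊆ ⋃ j, bowenBall T N (s j) ε := by
  classical
  obtain ⟨E, hE, hcard⟩ := exists_isSep_card_eq_maxSepCard (T := T) (n := N) hδ
  refine ⟨fun j => E.equivFin.symm (Fin.cast hcard.symm j), fun y _ => ?_⟩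
  by_contra hy
  have hfar : ∀ x ∈ E, ∃ i < N, δ < dist (T^[i] x) (T^[i] y) := by
    intro x hx
    by_contra! hnear
    refine hy (mem_iUnion.2 ⟨Fin.cast hcard (E.equivFin ⟨x, hx⟩), fun i hi => ?_⟩)
    simpa using (hnear i hi).trans_lt hδε
  have hyE : y ∉ E := fun hyE => by
    obtain ⟨i, -, hi⟩ := hfar y hyE
    simp at hi
    linarith
  have hsep : IsSep T N δ ↑(insert y E) := by
    intro a ha b hb hab
    simp only [Finset.coe_insert, mem_insert_iff, Finset.mem_coe] at ha hb
    rcases ha with rfl | ha <;> rcases hb with rfl | hb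
    · exact absurd rfl hab
    · simpa only [dist_comm] using hfar b hb
    · exact hfar a ha
    · exact hE a ha b hb hab
  have := hsep.card_le_maxSepCard hδ
  rw [Finset.card_insert_of_notMem hyE, hcard] at this
  omega

end maxSepCard

noncomputable def sepEntropy (T : X → X) (ε : ℝ) : ℝ :=
  limsup (fun n : ℕ => Real.log (maxSepCard T n ε) / n) atTop

section sepEntropy

variable [CompactSpace X] {ε : ℝ}

lemma sepSum_zero_eq (hε : 0 < ε) (n : ℕ) :
    sepSum T (fun _ => 0) n ε = maxSepCard T n ε := by
  refine IsGreatest.csSup_eq ⟨?_, ?_⟩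
  · obtain ⟨E, hE, hcard⟩ := exists_isSep_card_eq_maxSepCard (T := T) (n := n) hε
    exact ⟨E, hE, by simp [birkhoff, hcard]⟩
  · rintro _ ⟨E, hE, rfl⟩
    simpa [birkhoff] using hE.card_le_maxSepCard hε

lemma Ptop_zero_eq : Ptop T (fun _ => 0) = limsup (sepEntropy T) (𝓝[>] 0) := by
  refine limsup_congr (eventually_nhdsWithin_of_forall fun ε (hε : 0 < ε) => ?_)
  simp only [sepEntropy, sepSum_zero_eq hε]

variable [Nonempty X]

lemma log_maxSepCard_div_mem_Icc (hε : 0 < ε) :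
    ∃ R, ∀ n : ℕ, Real.log (maxSepCard T n ε) / n ∈ Icc 0 R := by
  obtain ⟨K, hK1, hK⟩ := exists_card_le_pow_of_isSep (T := T) hε
  refine ⟨Real.log K, fun n => ⟨?_, ?_⟩⟩
  · positivity
  · obtain ⟨E, hE, hcard⟩ := exists_isSep_card_eq_maxSepCard (T := T) (n := n) hε
    have hle : (maxSepCard T n ε : ℝ) ≤ (K : ℝ) ^ n := by exact_mod_cast hcard ▸ hK n E hE
    have hpos : (0 : ℝ) < maxSepCard T n ε := by exact_mod_cast one_le_maxSepCard hε
    rcases n.eq_zero_or_pos with rfl | hn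
    · simpa using Real.log_nonneg (by exact_mod_cast hK1)
    rw [div_le_iff₀ (by exact_mod_cast hn), mul_comm, ← Real.log_pow]
    exact Real.log_le_log hpos hle

lemma isBoundedUnder_log_maxSepCard_div (hε : 0 < ε) :
    IsBoundedUnder (· ≤ ·) atTop fun n : ℕ => Real.log (maxSepCard T n ε) / n :=
  let ⟨R, hR⟩ := log_maxSepCard_div_mem_Icc (T := T) hε
  isBoundedUnder_of ⟨R, fun n => (hR n).2⟩

lemma isCoboundedUnder_log_maxSepCard_div (hε : 0 < ε) :
    IsCoboundedUnder (· ≤ ·) atTop fun n : ℕ => Real.log (maxSepCard T n ε) / n :=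
  let ⟨_, hR⟩ := log_maxSepCard_div_mem_Icc (T := T) hε
  isCoboundedUnder_le_of_le atTop fun n => (hR n).1

lemma sepEntropy_nonneg (hε : 0 < ε) : 0 ≤ sepEntropy T ε :=
  let ⟨_, hR⟩ := log_maxSepCard_div_mem_Icc (T := T) hε
  le_limsup_of_frequently_le (.of_forall fun n => (hR n).1)
    (isBoundedUnder_log_maxSepCard_div hε)

lemma eventually_maxSepCard_le_exp_pow (hε : 0 < ε) {s : ℝ} (hs : sepEntropy T ε < s) :
    ∀ᶠ n in atTop, (maxSepCard T n ε : ℝ) ≤ Real.exp s ^ n := by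
  filter_upwards [eventually_lt_of_limsup_lt hs (isBoundedUnder_log_maxSepCard_div hε),
    eventually_gt_atTop 0] with n hn hn0
  have hpos : (0 : ℝ) < maxSepCard T n ε := by exact_mod_cast one_le_maxSepCard hε
  rw [div_lt_iff₀ (by exact_mod_cast hn0)] at hn
  rw [← Real.exp_log hpos, ← Real.exp_nat_mul, mul_comm]
  exact Real.exp_le_exp.2 hn.le

end sepEntropy

section ppM

lemma ppM_zero_eq (Z : Set X) (t : ℝ) (n : ℕ) (ε : ℝ) :
    ppM T (fun _ => 0) Z t n ε = ⨅ (c : ℕ → ℕ × X) (_ : ∀ i, n ≤ (c i).1)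
      (_ : Z ⊆ ⋃ i, bowenBall T (c i).1 (c i).2 ε),
        ∑' i, ENNReal.ofReal (Real.exp (-t)) ^ (c i).1 := by
  have hsSup (k : ℕ) (S : Set X) : sSup (birkhoff T (fun _ => 0) k '' S) = 0 := by
    have hzero : birkhoff T (fun _ => 0) k = fun _ => 0 := by funext; simp [birkhoff]
    rcases S.eq_empty_or_nonempty with rfl | hS
    · rw [image_empty, Real.sSup_empty]
    · rw [hzero, hS.image_const, csSup_singleton]
  simp only [ppM, hsSup, add_zero, mul_comm (-t), Real.exp_nat_mul,
    ENNReal.ofReal_pow (Real.exp_nonneg _)]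

lemma ppMlim_zero_ne_zero_of_nonpos (Z : Set X) {t : ℝ} (ht : t ≤ 0) (ε : ℝ) :
    ppMlim T (fun _ => 0) Z t ε ≠ 0 := by
  have hb : 1 ≤ ENNReal.ofReal (Real.exp (-t)) := by
    simpa using Real.one_le_exp (neg_nonneg.2 ht)
  refine ne_bot_of_le_ne_bot ENNReal.top_ne_zero (le_trans ?_ (le_iSup _ 0))
  simp only [ppM_zero_eq, le_iInf_iff]
  intro c _ _
  calc ⊤ = ∑' _ : ℕ, (1 : ℝ≥0∞) := (ENNReal.tsum_const_eq_top_of_ne_zero one_ne_zero).symm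
    _ ≤ _ := ENNReal.tsum_le_tsum fun i => one_le_pow₀ hb

variable [Nonempty X]

lemma ppM_zero_le_of_cover {Z : Set X} {t ε : ℝ} {n N k : ℕ} (s : Fin k → X) (hN : n ≤ N)
    (hZ : Z ⊆ ⋃ j, bowenBall T N (s j) ε) :
    ppM T (fun _ => 0) Z t n ε ≤
      (k + (1 - ENNReal.ofReal (Real.exp (-t)))⁻¹) * ENNReal.ofReal (Real.exp (-t)) ^ N := by
  classical
  set b := ENNReal.ofReal (Real.exp (-t))
  inhabit X
  -- pad the finite cover with balls of lengths `N + i` to obtain a countable one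
  let c : ℕ → ℕ × X := fun i => if h : i < k then (N, s ⟨i, h⟩) else (N + i, default)
  have hcover : Z ⊆ ⋃ i, bowenBall T (c i).1 (c i).2 ε := by
    intro y hy
    obtain ⟨j, hj⟩ := mem_iUnion.1 (hZ hy)
    exact mem_iUnion.2 ⟨j, by simpa [c, j.isLt] using hj⟩
  have hterm (i : ℕ) : b ^ (c i).1 ≤ (if i < k then b ^ N else 0) + b ^ N * b ^ i := by
    by_cases h : i < k
    · simp [c, h]
    · simp [c, h, pow_add]
  calc ppM T (fun _ => 0) Z t n ε ≤ ∑' i, b ^ (c i).1 := by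
        rw [ppM_zero_eq]
        refine iInf₂_le_of_le c (fun i => ?_) (iInf_le_of_le hcover le_rfl)
        by_cases h : i < k <;> simp [c, h] <;> omega
    _ ≤ ∑' i, ((if i < k then b ^ N else 0) + b ^ N * b ^ i) := ENNReal.tsum_le_tsum hterm
    _ = (k + (1 - b)⁻¹) * b ^ N := by
        rw [ENNReal.tsum_add, ENNReal.tsum_mul_left, ENNReal.tsum_geometric,
          tsum_eq_sum (s := Finset.range k) (by simp +contextual),
          Finset.sum_ite_of_true fun i hi => Finset.mem_range.1 hi]
        simp only [Finset.sum_const, Finset.card_range, nsmul_eq_mul]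
        ring

end ppM

section upperBound

variable [CompactSpace X] [Nonempty X]

lemma ppMlim_zero_eq_zero (Z : Set X) {t ε : ℝ} (hε : 0 < ε) (ht : sepEntropy T (ε / 2) < t) :
    ppMlim T (fun _ => 0) Z t ε = 0 := by
  have hε2 : 0 < ε / 2 := half_pos hε
  obtain ⟨s, hs, hst⟩ := exists_between ht
  have ht0 : 0 < t := (sepEntropy_nonneg hε2).trans_lt ht
  set b := ENNReal.ofReal (Real.exp (-t))
  have hb : b < 1 := by simpa [b] using ht0
  have ha : ENNReal.ofReal (Real.exp (s - t)) < 1 := by simpa using hst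
  have hcard : ∀ᶠ N in atTop,
      (maxSepCard T N (ε / 2) : ℝ≥0∞) * b ^ N ≤ ENNReal.ofReal (Real.exp (s - t)) ^ N := by
    filter_upwards [eventually_maxSepCard_le_exp_pow hε2 hs] with N hN
    rw [sub_eq_add_neg, Real.exp_add, ENNReal.ofReal_mul (Real.exp_nonneg _),
      mul_pow, ← ENNReal.ofReal_pow (Real.exp_nonneg s), ← ENNReal.ofReal_natCast]
    gcongr
  have hlim : Tendsto (fun N => ((maxSepCard T N (ε / 2) : ℝ≥0∞) + (1 - b)⁻¹) * b ^ N)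
      atTop (𝓝 0) := by
    simp_rw [add_mul]
    rw [← add_zero (0 : ℝ≥0∞)]
    refine Tendsto.add ?_ ?_
    · exact tendsto_of_tendsto_of_tendsto_of_le_of_le' tendsto_const_nhds
        (ENNReal.tendsto_pow_atTop_nhds_zero_of_lt_one ha) (.of_forall fun _ => zero_le) hcard
    · simpa using ENNReal.Tendsto.const_mul (ENNReal.tendsto_pow_atTop_nhds_zero_of_lt_one hb)
        (Or.inr (ENNReal.inv_ne_top.2 (tsub_pos_of_lt hb).ne'))
  refine ENNReal.iSup_eq_zero.2 fun n => le_antisymm (ge_of_tendsto hlim ?_) zero_le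
  filter_upwards [eventually_ge_atTop n] with N hN
  obtain ⟨c, hc⟩ := exists_cover_bowenBall_maxSepCard (T := T) hε2 (half_lt_self hε) N
  exact ppM_zero_le_of_cover c hN ((subset_univ Z).trans hc)

lemma ppPressureAt_zero_le_sepEntropy (Z : Set X) {ε : ℝ} (hε : 0 < ε) :
    ppPressureAt T (fun _ => 0) Z ε ≤ sepEntropy T (ε / 2) := by
  have hbdd : BddBelow {t | ppMlim T (fun _ => 0) Z t ε = 0} :=
    ⟨0, fun t ht => le_of_not_ge fun h => ppMlim_zero_ne_zero_of_nonpos Z h ε ht⟩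
  exact le_of_forall_gt_imp_ge_of_dense fun t ht => csInf_le hbdd (ppMlim_zero_eq_zero Z hε ht)

end upperBound

/-- `Specification T` is, by definition, `∀ ε > 0, ∃ m, SpecGap T ε m`. -/
def SpecGap (T : X → X) (ε : ℝ) (m : ℕ) : Prop :=
  ∀ (k : ℕ) (a b : Fin k → ℕ) (xs : Fin k → X),
    (∀ j, a j ≤ b j) →
    (∀ (j : ℕ) (h : j + 1 < k), b ⟨j, Nat.lt_of_succ_lt h⟩ + m ≤ a ⟨j + 1, h⟩) →
    ∃ x : X, ∀ j : Fin k, ∀ p ≤ b j - a j, dist (T^[p + a j] x) (T^[p] (xs j)) < ε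

namespace SpecGap

variable [CompactSpace X] {ε : ℝ} {m : ℕ}

lemma exists_forall_dist_le (hT : Continuous T) (hm : SpecGap T ε m) (a b : ℕ → ℕ)
    (xs : ℕ → X) (hab : ∀ i, a i ≤ b i) (hgap : ∀ i, b i + m ≤ a (i + 1)) :
    ∃ x, ∀ i, ∀ p ≤ b i - a i, dist (T^[p + a i] x) (T^[p] (xs i)) ≤ ε := by
  let P (i : ℕ) : Set X := ⋂ p ∈ Iic (b i - a i), {x | dist (T^[p + a i] x) (T^[p] (xs i)) ≤ ε}
  have hP (i : ℕ) : IsClosed (P i) :=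
    isClosed_biInter fun _ _ => isClosed_le ((hT.iterate _).dist continuous_const) continuous_const
  obtain ⟨x, -, hx⟩ := isCompact_univ.inter_iInter_nonempty P hP fun u => by
    obtain ⟨x, hx⟩ := hm (u.sup id + 1) (fun j => a j) (fun j => b j) (fun j => xs j)
      (fun j => hab j) (fun j _ => hgap j)
    refine ⟨x, mem_univ x, mem_iInter₂.2 fun i hi => mem_iInter₂.2 fun p hp => (hx
      ⟨i, Nat.lt_succ_of_le (Finset.le_sup (f := id) hi)⟩ p hp).le⟩
  exact ⟨x, fun i p hp => mem_iInter₂.1 (mem_iInter.1 hx i) p hp⟩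

lemma exists_forall_blocks (hT : Continuous T) (hm : SpecGap T ε m) {n L : ℕ}
    (hL : n + 2 * m < L) (w : X) (ω : ℕ → X) :
    ∃ x, ∀ j, (∀ p ≤ n, dist (T^[p + j * L] x) (T^[p] (ω j)) ≤ ε) ∧
      T^[j * L + (n + m)] x ∈ closedBall w ε := by
  -- segment `2 j` is the orbit of `ω j` on `[j L, j L + n]`, segment `2 j + 1` is `w` at
  -- time `j L + n + m`
  obtain ⟨x, hx⟩ := hm.exists_forall_dist_le hT (fun i => i / 2 * L + i % 2 * (n + m))
    (fun i => i / 2 * L + n + i % 2 * m) (fun i => if i % 2 = 0 then ω (i / 2) else w)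
    (fun i => by rcases Nat.mod_two_eq_zero_or_one i with h | h <;> simp [h, add_assoc])
    (fun i => by
      rcases Nat.even_or_odd' i with ⟨j, rfl | rfl⟩
      · simp [Nat.add_mod, Nat.add_div]; omega
      · simp [Nat.add_mod, Nat.add_div]; ring_nf; omega)
  refine ⟨x, fun j => ⟨fun p hp => ?_, ?_⟩⟩
  · simpa using hx (2 * j) p (by simpa using hp)
  · have hj : (2 * j + 1) / 2 = j := by omega
    simpa [hj] using hx (2 * j + 1) 0 (Nat.zero_le _)

end SpecGap

lemma mem_Eset_of_forall_iterate_mem {Y : Type*} [TopologicalSpace Y] {S : Y → Y}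
    (hS : Continuous S) {C : Set Y} (hC : IsClosed C) {z₀ x : Y} (hz₀ : ∀ s, S^[s] z₀ ∉ C)
    {r L : ℕ} (hL : 0 < L) (hx : ∀ j, S^[j * L + r] x ∈ C) : x ∈ Eset S z₀ := by
  have hG : IsClosed (⋃ s ∈ Finset.range (r + L + 1), S^[s] ⁻¹' C) :=
    isClosed_biUnion_finset fun s _ => hC.preimage (hS.iterate s)
  have horbit : range (fun n => S^[n] x) ⊆ ⋃ s ∈ Finset.range (r + L + 1), S^[s] ⁻¹' C := by
    rintro _ ⟨i, rfl⟩
    have h₁ := Nat.lt_div_mul_add (a := i) hL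
    have h₂ := Nat.div_mul_le_self i L
    refine mem_biUnion (x := (i / L + 1) * L + r - i)
      (Finset.mem_range.2 (by rw [add_mul]; omega)) ?_
    rw [mem_preimage, ← Function.iterate_add_apply, Nat.sub_add_cancel (by rw [add_mul]; omega)]
    exact hx _
  intro hz
  obtain ⟨s, -, hs⟩ := mem_iUnion₂.1 (hG.closure_subset_iff.2 horbit hz)
  exact hz₀ s hs

lemma IsSep.eq_of_shadow {Γ : Set X} {n M i : ℕ} {ε : ℝ} (hΓ : IsSep T (n + 1) (4 * ε) Γ)
    {y y' x x' c : X} (hy : y ∈ Γ) (hy' : y' ∈ Γ)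
    (hx : ∀ p ≤ n, dist (T^[p + i] x) (T^[p] y) ≤ ε)
    (hx' : ∀ p ≤ n, dist (T^[p + i] x') (T^[p] y') ≤ ε)
    (hxc : x ∈ bowenBall T M c ε) (hx'c : x' ∈ bowenBall T M c ε) (hM : n + i < M) :
    y = y' := by
  by_contra hne
  obtain ⟨p, hp, hsep⟩ := hΓ y hy y' hy' hne
  have h₁ := hx p (by omega)
  have h₂ := hx' p (by omega)
  have h₃ := hxc (p + i) (by omega)
  have h₄ := hx'c (p + i) (by omega)
  have := dist_triangle4 (T^[p] y) (T^[p + i] x) (T^[p + i] c) (T^[p] y')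
  have := dist_triangle (T^[p + i] c) (T^[p + i] x') (T^[p] y')
  rw [dist_comm] at h₁ h₃
  linarith

lemma card_pow_le_sum_card_pow {α ι : Type*} [Fintype α] {K : ℕ} (I : Finset ι) (k : ι → ℕ)
    (f : (Fin K → α) → ι) (hf : ∀ W, f W ∈ I)
    (hprefix : ∀ W W', f W = f W' → ∀ j : Fin K, (j : ℕ) < k (f W) → W j = W' j) :
    Fintype.card α ^ K ≤ ∑ i ∈ I, Fintype.card α ^ (K - k i) := by
  classical
  rw [show Fintype.card α ^ K = Fintype.card (Fin K → α) by simp, ← Finset.card_univ,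
    Finset.card_eq_sum_card_fiberwise fun W _ => hf W]
  refine Finset.sum_le_sum fun i _ => ?_
  -- a word of class `i` is determined by its letters from position `k i` on
  have hinj : InjOn (fun W (r : Fin (K - k i)) => W ⟨k i + r, by omega⟩)
      {W | f W = i} := by
    intro W hW W' hW' hsuffix
    funext j
    by_cases hj : (j : ℕ) < k i
    · exact hprefix W W' (hW.trans hW'.symm) j (hW ▸ hj)
    · simpa [show k i + (j - k i) = j by omega] using
        congrFun hsuffix ⟨j - k i, by omega⟩
  calc _ ≤ Fintype.card (Fin (K - k i) → α) :=
        Finset.card_le_card_of_injOn _ (fun _ _ => Finset.mem_univ _) (by simpa using hinj)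
    _ = Fintype.card α ^ (K - k i) := by simp

lemma one_le_sum_inv_card_pow {α ι : Type*} [Fintype α] [Nonempty α] {K : ℕ} (I : Finset ι)
    (k : ι → ℕ) (hk : ∀ i ∈ I, k i ≤ K) (f : (Fin K → α) → ι) (hf : ∀ W, f W ∈ I)
    (hprefix : ∀ W W', f W = f W' → ∀ j : Fin K, (j : ℕ) < k (f W) → W j = W' j) :
    1 ≤ ∑ i ∈ I, ((Fintype.card α : ℝ) ^ k i)⁻¹ := by
  have hS : (0 : ℝ) < Fintype.card α := by exact_mod_cast Fintype.card_pos
  have hcount : (Fintype.card α : ℝ) ^ K ≤ ∑ i ∈ I, (Fintype.card α : ℝ) ^ (K - k i) := by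
    exact_mod_cast card_pow_le_sum_card_pow I k f hf hprefix
  have hdiv := (one_le_div (by positivity)).2 hcount
  rw [Finset.sum_div] at hdiv
  refine hdiv.trans_eq (Finset.sum_congr rfl fun i hi => ?_)
  rw [pow_sub₀ _ hS.ne' (hk i hi), div_eq_inv_mul, inv_mul_cancel_left₀ (by positivity)]

lemma mul_le_div_mul {q L M : ℕ} (hq : 0 < q) (hL : 0 < L) (hM : q * L ≤ M) {t s : ℝ}
    (ht : 0 ≤ t) (h : t * ((q + 1) * L) ≤ q * s) : t * M ≤ (M / L : ℕ) * s := by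
  set k := M / L
  have hkq : (q : ℝ) ≤ k := by exact_mod_cast (Nat.le_div_iff_mul_le hL).2 hM
  have hMk : (M : ℝ) ≤ (k + 1) * L := by
    exact_mod_cast (Nat.lt_div_mul_add hL).le.trans_eq (by ring)
  have hq' : (0 : ℝ) < q := by exact_mod_cast hq
  have hL' : (0 : ℝ) ≤ L := Nat.cast_nonneg L
  have : q * (t * ((k + 1) * L)) ≤ q * (k * s) := by
    nlinarith [mul_le_mul_of_nonneg_left h (Nat.cast_nonneg k),
      mul_nonneg (sub_nonneg.2 hkq) (mul_nonneg ht hL')]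
  nlinarith [le_of_mul_le_mul_left this hq']

lemma isOpen_bowenBall (hT : Continuous T) (n : ℕ) (x : X) (ε : ℝ) :
    IsOpen (bowenBall T n x ε) := by
  have : bowenBall T n x ε = ⋂ i ∈ Finset.range n, {y | dist (T^[i] x) (T^[i] y) < ε} := by
    ext; simp [bowenBall]
  rw [this]
  exact isOpen_biInter_finset fun i _ =>
    isOpen_lt (continuous_const.dist (hT.iterate i)) continuous_const

lemma exists_one_le_sum_inv_card_pow_of_Eset_subset [CompactSpace X] (hT : Continuous T)
    {ε : ℝ} {m : ℕ} (hm : SpecGap T ε m) {z₀ w : X} (hw : ∀ s, T^[s] z₀ ∉ closedBall w ε)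
    {n L : ℕ} (hL : n + 2 * m < L) {Γ : Finset X} (hΓ : IsSep T (n + 1) (4 * ε) Γ)
    (hΓne : Γ.Nonempty) {c : ℕ → ℕ × X} (hcover : Eset T z₀ ⊆ ⋃ i, bowenBall T (c i).1 (c i).2 ε) :
    ∃ I : Finset ℕ, 1 ≤ ∑ i ∈ I, ((Γ.card : ℝ) ^ ((c i).1 / L))⁻¹ := by
  classical
  have : Nonempty Γ := hΓne.to_subtype
  -- a compact part of `E(z₀)`: the points returning to `closedBall w ε` every `L` steps
  set F := ⋂ j : ℕ, T^[j * L + (n + m)] ⁻¹' closedBall w ε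
  have hFE : F ⊆ Eset T z₀ := fun x hx =>
    mem_Eset_of_forall_iterate_mem hT isClosed_closedBall hw (L := L) (r := n + m) (by omega)
      fun j => mem_iInter.1 hx j
  have hF : IsCompact F :=
    (isClosed_iInter fun _ => isClosed_closedBall.preimage (hT.iterate _)).isCompact
  obtain ⟨I, hI⟩ := hF.elim_finite_subcover _ (fun i => isOpen_bowenBall hT _ _ _)
    (hFE.trans hcover)
  set k : ℕ → ℕ := fun i => (c i).1 / L
  have hword (W : Fin (I.sup k) → Γ) :
      ∃ x ∈ F, ∀ j : Fin (I.sup k), ∀ p ≤ n, dist (T^[p + j * L] x) (T^[p] (W j)) ≤ ε := by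
    obtain ⟨x, hx⟩ := hm.exists_forall_blocks hT hL w fun j =>
      if h : j < I.sup k then (W ⟨j, h⟩ : X) else w
    exact ⟨x, mem_iInter.2 fun j => (hx j).2, fun j p hp => by
      simpa only [dif_pos j.isLt] using (hx j).1 p hp⟩
  choose pt hptF hpt using hword
  have hball (W : Fin (I.sup k) → Γ) : ∃ i ∈ I, pt W ∈ bowenBall T (c i).1 (c i).2 ε := by
    simpa using hI (hptF W)
  choose idx hidxI hidx using hball
  have hprefix :
      ∀ W W', idx W = idx W' → ∀ j : Fin (I.sup k), (j : ℕ) < k (idx W) → W j = W' j := by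
    intro W W' hWW' j hj
    refine Subtype.ext (hΓ.eq_of_shadow (W j).2 (W' j).2 (hpt W j) (hpt W' j) (hidx W)
      (hWW' ▸ hidx W') ?_)
    have := (Nat.le_div_iff_mul_le (by omega)).1 hj
    rw [Nat.succ_mul] at this
    omega
  have hcount := one_le_sum_inv_card_pow I k (fun i hi => Finset.le_sup hi) idx hidxI hprefix
  exact ⟨I, by simpa using hcount⟩

lemma one_le_ppM_zero_Eset [CompactSpace X] (hT : Continuous T) {ε : ℝ} {m : ℕ}
    (hm : SpecGap T ε m) {z₀ w : X} (hw : ∀ s, T^[s] z₀ ∉ closedBall w ε) {n L : ℕ}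
    (hL : n + 2 * m < L) {Γ : Finset X} (hΓ : IsSep T (n + 1) (4 * ε) Γ) (hΓne : Γ.Nonempty)
    {q : ℕ} (hq : 0 < q) {t : ℝ} (ht : 0 ≤ t) (htq : t * ((q + 1) * L) ≤ q * Real.log Γ.card) :
    1 ≤ ppM T (fun _ => 0) (Eset T z₀) t (q * L) ε := by
  rw [ppM_zero_eq]
  refine le_iInf₂ fun c hc => le_iInf fun hcover => ?_
  obtain ⟨I, hI⟩ := exists_one_le_sum_inv_card_pow_of_Eset_subset hT hm hw hL hΓ hΓne hcover
  have hterm (i : ℕ) : ((Γ.card : ℝ) ^ ((c i).1 / L))⁻¹ ≤ Real.exp (-t * (c i).1) := by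
    have hΓpos : (0 : ℝ) < Γ.card := by exact_mod_cast hΓne.card_pos
    rw [← Real.exp_log hΓpos, ← Real.exp_nat_mul, ← Real.exp_neg, Real.exp_le_exp, neg_mul,
      neg_le_neg_iff]
    exact mul_le_div_mul hq (by omega) (hc i) ht htq
  calc (1 : ℝ≥0∞) ≤ ENNReal.ofReal (∑ i ∈ I, Real.exp (-t * (c i).1)) := by
        simpa using ENNReal.ofReal_le_ofReal (hI.trans (Finset.sum_le_sum fun i _ => hterm i))
    _ = ∑ i ∈ I, ENNReal.ofReal (Real.exp (-t)) ^ (c i).1 := by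
        rw [ENNReal.ofReal_sum_of_nonneg fun _ _ => (Real.exp_pos _).le]
        simp only [mul_comm (-t), Real.exp_nat_mul, ENNReal.ofReal_pow (Real.exp_nonneg _)]
    _ ≤ ∑' i, ENNReal.ofReal (Real.exp (-t)) ^ (c i).1 := ENNReal.sum_le_tsum I

section lowerBound

variable [CompactSpace X] [Nonempty X] {ε : ℝ} {m : ℕ} {z₀ w : X}

lemma log_maxSepCard_div_le_ppPressureAt (hT : Continuous T) (hm : SpecGap T ε m)
    (hε : 0 < ε) (hw : ∀ s, T^[s] z₀ ∉ closedBall w ε) (n : ℕ) :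
    Real.log (maxSepCard T (n + 1) (4 * ε)) / (n + 1 + 2 * m : ℕ) ≤
      ppPressureAt T (fun _ => 0) (Eset T z₀) ε := by
  set L := n + 1 + 2 * m
  have hL : (0 : ℝ) < L := by positivity
  obtain ⟨Γ, hΓ, hcard⟩ := exists_isSep_card_eq_maxSepCard (T := T) (n := n + 1)
    (by positivity : 0 < 4 * ε)
  have hΓne : Γ.Nonempty := Finset.card_pos.1 (hcard ▸ one_le_maxSepCard (by positivity))
  refine le_csInf ⟨_, ppMlim_zero_eq_zero _ hε (lt_add_one _)⟩ fun t ht => ?_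
  have ht0 : 0 < t := lt_of_not_ge fun h => ppMlim_zero_ne_zero_of_nonpos _ h ε ht
  by_contra! hlt
  rw [← hcard, lt_div_iff₀ hL] at hlt
  -- a long enough threshold `q L` absorbs the loss of one block per Bowen ball
  obtain ⟨q, hq⟩ := exists_nat_gt (t * L / (Real.log Γ.card - t * L))
  have hq' : t * L < q * (Real.log Γ.card - t * L) := by
    rwa [div_lt_iff₀ (by linarith)] at hq
  have hq0 : 0 < q := Nat.cast_pos.1 ((div_pos (by positivity) (by linarith)).trans hq)
  have hone := one_le_ppM_zero_Eset hT hm hw (L := L) (by omega) hΓ hΓne hq0 ht0.le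
    (by linarith)
  have := hone.trans (le_iSup (fun k => ppM T (fun _ => 0) (Eset T z₀) t k ε) _)
  exact absurd (this.trans_eq ht) (by simp)

lemma sepEntropy_le_ppPressureAt (hT : Continuous T) (hm : SpecGap T ε m) (hε : 0 < ε)
    (hw : ∀ s, T^[s] z₀ ∉ closedBall w ε) :
    sepEntropy T (4 * ε) ≤ ppPressureAt T (fun _ => 0) (Eset T z₀) ε := by
  set p := ppPressureAt T (fun _ => 0) (Eset T z₀) ε
  have hlim : Tendsto (fun N : ℕ => p + 2 * m * p / N) atTop (𝓝 p) := by
    simpa using tendsto_const_nhds.add (tendsto_const_div_atTop_nhds_zero_nat (2 * m * p))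
  have hle : ∀ᶠ N : ℕ in atTop,
      Real.log (maxSepCard T N (4 * ε)) / N ≤ p + 2 * m * p / N := by
    filter_upwards [eventually_gt_atTop 0] with N hN
    obtain ⟨n, rfl⟩ := Nat.exists_eq_add_one_of_ne_zero hN.ne'
    have h := log_maxSepCard_div_le_ppPressureAt hT hm hε hw n
    rw [div_le_iff₀ (by positivity)] at h
    rw [div_le_iff₀ (by exact_mod_cast hN), add_mul, div_mul_cancel₀ _ (by exact_mod_cast hN.ne')]
    push_cast at h ⊢
    linarith
  calc sepEntropy T (4 * ε) ≤ limsup (fun N : ℕ => p + 2 * m * p / N) atTop :=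
        limsup_le_limsup hle (isCoboundedUnder_log_maxSepCard_div (by positivity))
          hlim.isBoundedUnder_le
    _ = p := hlim.limsup_eq

end lowerBound

lemma limsup_nhdsGT_zero_eq_of_le_mul {f g : ℝ → ℝ} {a b : ℝ} (ha : 0 < a) (hb : 0 < b)
    (hfg : ∀ᶠ ε in 𝓝[>] 0, f ε ≤ g (b * ε)) (hgf : ∀ᶠ ε in 𝓝[>] 0, g ε ≤ f (a * ε)) :
    limsup f (𝓝[>] 0) = limsup g (𝓝[>] 0) := by
  rw [limsup_eq, limsup_eq]
  congr 1
  ext c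
  exact ⟨fun hf => (hgf.and (eventually_nhdsGT_zero_mul_left ha hf)).mono fun _ h => h.1.trans h.2,
    fun hg => (hfg.and (eventually_nhdsGT_zero_mul_left hb hg)).mono fun _ h => h.1.trans h.2⟩

end

/-- entropy case: with the specification property and a non-transitive
point `z₀`, either `E(z₀) = ∅` or the Bowen entropy `h^B(T, E(z₀)) = P(E(z₀), 0)`
equals the topological entropy `h_top(T) = P_top(0)`. -/
theorem stmt7 {X : Type*} [MetricSpace X] [CompactSpace X]
    (T : X → X) (hT : Continuous T) (hspec : Specification T)
    (z₀ : X) (hz₀ : closure (Set.range fun n : ℕ => T^[n] z₀) ≠ Set.univ) :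
    Eset T z₀ = ∅ ∨ ppPressure T (fun _ => (0 : ℝ)) (Eset T z₀) = Ptop T (fun _ => (0 : ℝ)) := by
  refine Or.inr ?_
  have : Nonempty X := ⟨z₀⟩
  obtain ⟨w, hw⟩ := (ne_univ_iff_exists_notMem _).1 hz₀
  obtain ⟨η, hη, hball⟩ := Metric.isOpen_iff.1 isClosed_closure.isOpen_compl w hw
  have hfar (ε : ℝ) (hε : ε < η) (s : ℕ) : T^[s] z₀ ∉ closedBall w ε := fun hs =>
    hball (closedBall_subset_ball hε hs) (subset_closure ⟨s, rfl⟩)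
  rw [ppPressure, Ptop_zero_eq]
  refine limsup_nhdsGT_zero_eq_of_le_mul (a := 1 / 4) (b := 1 / 2) (by norm_num) (by norm_num)
    ?_ ?_
  · filter_upwards [self_mem_nhdsWithin] with ε hε
    simpa [div_eq_inv_mul] using ppPressureAt_zero_le_sepEntropy (Eset T z₀) hε
  · filter_upwards [Ioo_mem_nhdsGT (by positivity : (0 : ℝ) < 4 * η)] with ε hε
    have hε4 : 0 < 1 / 4 * ε := by linarith [hε.1]
    obtain ⟨m, hm⟩ := hspec _ hε4
    simpa [← mul_assoc] using sepEntropy_le_ppPressureAt hT hm hε4 (hfar _ (by linarith [hε.2]))
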